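/- Let L: ℝ×ℝ → ℝ be a loss function twice partially differentiable in its first argument, with L' and L'' the first and second partial derivatives. Let Θ₀ be the Bayes estimator minimizing E[L(δ, θ)|X]. Then for any estimator δ₀ converging to Θ₀, the expected loss satisfies E[L(δ₀, θ)] = E[L(Θ₀, θ)] + (1/2)E[L''(Θ₀, θ)(δ₀ − Θ₀)²] + o(E[(δ₀ − Θ₀)²]), the first-order term vanishing because E[L'(Θ₀, θ)|X] = 0. -/

import Mathlib

open MeasureTheory Filter Asymptotics

lemma taylor_aux (f : ℝ → ℝ) (hf : ContDiff ℝ 2 f) {C : ℝ} (hC : 0 ≤ C)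
    (hLip : ∀ x y, |deriv (deriv f) x - deriv (deriv f) y| ≤ C * |x - y|)
    (a b : ℝ) :
    |f a - f b - deriv f b * (a - b) - 1/2 * deriv (deriv f) b * (a - b)^2|
      ≤ C * |a - b|^3 := by
  have h2 : (2 : WithTop ℕ∞) = 1 + 1 := by norm_num
  have hf1 := (contDiff_succ_iff_deriv (f := f) (n := 1)).mp (h2 ▸ hf)
  have hdf : Differentiable ℝ f := hf1.1
  have hdf' : Differentiable ℝ (deriv f) := hf1.2.2.differentiable one_ne_zero
  set f' := deriv f with hf'
  set f'' := deriv f' with hf''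
  set g : ℝ → ℝ := fun x => f x - f b - f' b * (x - b) - 1/2 * f'' b * (x - b)^2 with hg
  set g' : ℝ → ℝ := fun x => f' x - f' b - f'' b * (x - b) with hg'
  have hgd : ∀ x, HasDerivAt g (g' x) x := by
    intro x
    have p1 : HasDerivAt f (f' x) x := (hdf x).hasDerivAt
    have p3 : HasDerivAt (fun x => f' b * (x - b)) (f' b * 1) x :=
      ((hasDerivAt_id x).sub_const b).const_mul (f' b)
    have p4 : HasDerivAt (fun x => 1/2 * f'' b * (x - b)^2)
        (1/2 * f'' b * (2 * (x - b)^1 * 1)) x :=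
      (((hasDerivAt_id x).sub_const b).pow 2).const_mul (1/2 * f'' b)
    have := ((p1.sub_const (f b)).sub p3).sub p4
    refine this.congr_deriv ?_
    simp only [hg']; ring
  have hg'd : ∀ x, HasDerivAt g' (f'' x - f'' b) x := by
    intro x
    have p1 : HasDerivAt f' (f'' x) x := (hdf' x).hasDerivAt
    have p3 : HasDerivAt (fun x => f'' b * (x - b)) (f'' b * 1) x :=
      ((hasDerivAt_id x).sub_const b).const_mul (f'' b)
    have := (p1.sub_const (f' b)).sub p3
    refine this.congr_deriv ?_
    ring
  set s := Metric.closedBall b |a - b| with hs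
  have hconv : Convex ℝ s := convex_closedBall _ _
  have hbs : b ∈ s := Metric.mem_closedBall_self (abs_nonneg _)
  have has : a ∈ s := by simp [s, Metric.mem_closedBall, Real.dist_eq]
  -- step 1 : bound g' on s
  have step1 : ∀ x ∈ s, |g' x| ≤ C * |a - b| * |a - b| := by
    intro x hx
    have hxb : |x - b| ≤ |a - b| := by
      simpa [s, Real.dist_eq] using hx
    have := hconv.norm_image_sub_le_of_norm_hasDerivWithin_le
      (f := g') (f' := fun x => f'' x - f'' b)
      (fun y hy => (hg'd y).hasDerivWithinAt)
      (fun y hy => by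
        have hyb : |y - b| ≤ |a - b| := by simpa [s, Real.dist_eq] using hy
        calc ‖f'' y - f'' b‖ ≤ C * |y - b| := hLip y b
          _ ≤ C * |a - b| := by nlinarith)
      hbs hx
    have hgb : g' b = 0 := by simp [g']
    calc |g' x| = ‖g' x - g' b‖ := by rw [hgb]; simp
      _ ≤ C * |a - b| * ‖x - b‖ := this
      _ ≤ C * |a - b| * |a - b| := by
          have : (0:ℝ) ≤ C * |a - b| := mul_nonneg hC (abs_nonneg _)
          simpa [Real.norm_eq_abs] using mul_le_mul_of_nonneg_left hxb this
  -- step 2 : bound g a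
  have step2 := hconv.norm_image_sub_le_of_norm_hasDerivWithin_le
    (f := g) (f' := g')
    (fun y hy => (hgd y).hasDerivWithinAt)
    (fun y hy => by simpa [Real.norm_eq_abs] using step1 y hy)
    hbs has
  have hgb : g b = 0 := by simp [g]
  have : |g a| ≤ C * |a - b| * |a - b| * |a - b| := by
    calc |g a| = ‖g a - g b‖ := by rw [hgb]; simp
      _ ≤ C * |a - b| * |a - b| * ‖a - b‖ := step2
      _ = C * |a - b| * |a - b| * |a - b| := by rw [Real.norm_eq_abs]
  calc |f a - f b - f' b * (a - b) - 1/2 * f'' b * (a - b)^2| = |g a| := rfl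
    _ ≤ C * |a - b| * |a - b| * |a - b| := this
    _ = C * |a - b|^3 := by ring


/-- Second-order expansion of the Bayes risk around the Bayes estimator: for a
loss `L` twice differentiable in its first argument with Lipschitz second
derivative, a Bayes estimator `Θ₀` (first-order condition
`E[L'(Θ₀,θ)|X] = 0`), and estimators `δₙ` converging to `Θ₀` with `δₙ − Θ₀`
conditionally independent of `θ` given `X` (factorization of conditional
expectations), one has
`E[L(δₙ,θ)] = E[L(Θ₀,θ)] + ½E[L''(Θ₀,θ)(δₙ−Θ₀)²] + o(E[(δₙ−Θ₀)²])`. -/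
theorem loss_risk_second_order_expansion
    {Ω : Type*} {mΩ : MeasurableSpace Ω} {μ : Measure Ω} [IsProbabilityMeasure μ]
    {m : MeasurableSpace Ω} (hm : m ≤ mΩ)        -- `m = σ(X)`
    (θ Θ₀ : Ω → ℝ) (hΘm : StronglyMeasurable[m] Θ₀)
    (L L' L'' : ℝ → ℝ → ℝ)
    (hLsmooth : ∀ y, ContDiff ℝ 2 fun x => L x y)
    (hL' : ∀ x y, L' x y = deriv (fun a => L a y) x)
    (hL'' : ∀ x y, L'' x y = deriv (fun a => L' a y) x)
    (hLip : ∃ C, ∀ a b y, |L'' a y - L'' b y| ≤ C * |a - b|)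
    (δ : ℕ → Ω → ℝ)
    -- integrability of all relevant quantities:
    (hint1 : ∀ n, Integrable (fun ω => L (δ n ω) (θ ω)) μ)
    (hint2 : Integrable (fun ω => L (Θ₀ ω) (θ ω)) μ)
    (hint3 : ∀ n, Integrable (fun ω => L'' (Θ₀ ω) (θ ω) * (δ n ω - Θ₀ ω) ^ 2) μ)
    (hint4 : Integrable (fun ω => L' (Θ₀ ω) (θ ω)) μ)
    (hint5 : ∀ n, Integrable (fun ω => (δ n ω - Θ₀ ω) * L' (Θ₀ ω) (θ ω)) μ)
    (hδ2 : ∀ n, MemLp (fun ω => δ n ω - Θ₀ ω) 2 μ)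
    -- first-order condition for the Bayes estimator:
    (hfoc : μ[fun ω => L' (Θ₀ ω) (θ ω)|m] =ᵐ[μ] 0)
    -- conditional independence of `δₙ − Θ₀` and `θ` given `X`:
    (hci : ∀ n,
      μ[fun ω => (δ n ω - Θ₀ ω) * L' (Θ₀ ω) (θ ω)|m]
        =ᵐ[μ] fun ω =>
          ((μ[fun ω' => (δ n ω' - Θ₀ ω')|m]) ω) * ((μ[fun ω' => L' (Θ₀ ω') (θ ω')|m]) ω))
    -- `δₙ → Θ₀` (uniformly):
    (hunif : ∀ ε > 0, ∀ᶠ n in atTop, ∀ ω, |δ n ω - Θ₀ ω| ≤ ε) :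
    (fun n => (∫ ω, L (δ n ω) (θ ω) ∂μ) - (∫ ω, L (Θ₀ ω) (θ ω) ∂μ)
        - (1 / 2) * ∫ ω, L'' (Θ₀ ω) (θ ω) * (δ n ω - Θ₀ ω) ^ 2 ∂μ)
      =o[atTop] (fun n => ∫ ω, (δ n ω - Θ₀ ω) ^ 2 ∂μ) := by
  obtain ⟨C, hC⟩ := hLip
  set C0 : ℝ := max C 0 + 1 with hC0def
  have hC0pos : 0 < C0 := by positivity
  have hLip0 : ∀ a b y, |L'' a y - L'' b y| ≤ C0 * |a - b| := by
    intro a b y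
    refine (hC a b y).trans ?_
    have h1 : C ≤ C0 := by
      have := le_max_left C 0; simp only [hC0def]; linarith
    nlinarith [abs_nonneg (a - b)]
  have hder2 : ∀ y, (fun x => L'' x y) = fun x => deriv (deriv (fun a => L a y)) x := by
    intro y
    funext x
    rw [hL'' x y]
    congr 1
    funext a
    exact hL' a y
  have htay : ∀ (a b y : ℝ),
      |L a y - L b y - L' b y * (a - b) - 1/2 * L'' b y * (a - b)^2| ≤ C0 * |a - b|^3 := by
    intro a b y
    have hdd : ∀ x, L'' x y = deriv (deriv (fun a => L a y)) x := fun x => congrFun (hder2 y) x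
    have h := taylor_aux (fun x => L x y) (hLsmooth y) hC0pos.le
      (fun x x' => by rw [← hdd, ← hdd]; exact hLip0 x x' y) a b
    rw [← hL' b y, ← hdd b] at h
    exact h
  -- zero first-order term
  haveI : SigmaFinite (μ.trim hm) := by
    exact IsFiniteMeasure.toSigmaFinite _
  have hzero : ∀ n, ∫ ω, (δ n ω - Θ₀ ω) * L' (Θ₀ ω) (θ ω) ∂μ = 0 := by
    intro n
    have h0 : (fun ω => ((μ[fun ω' => (δ n ω' - Θ₀ ω')|m]) ω)
        * ((μ[fun ω' => L' (Θ₀ ω') (θ ω')|m]) ω)) =ᵐ[μ] 0 := by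
      filter_upwards [hfoc] with ω hω
      simp [hω]
    calc ∫ ω, (δ n ω - Θ₀ ω) * L' (Θ₀ ω) (θ ω) ∂μ
        = ∫ ω, (μ[fun ω' => (δ n ω' - Θ₀ ω') * L' (Θ₀ ω') (θ ω')|m]) ω ∂μ :=
          (integral_condExp hm).symm
      _ = ∫ ω, (0 : Ω → ℝ) ω ∂μ := integral_congr_ae ((hci n).trans h0)
      _ = 0 := by simp
  -- remainder function
  set R : ℕ → Ω → ℝ := fun n ω =>
    L (δ n ω) (θ ω) - L (Θ₀ ω) (θ ω) - (δ n ω - Θ₀ ω) * L' (Θ₀ ω) (θ ω)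
      - 1/2 * (L'' (Θ₀ ω) (θ ω) * (δ n ω - Θ₀ ω)^2) with hR
  have hRint : ∀ n, Integrable (R n) μ := fun n =>
    (((hint1 n).sub hint2).sub (hint5 n)).sub ((hint3 n).const_mul (1/2))
  have hRbound : ∀ n ω, |R n ω| ≤ C0 * |δ n ω - Θ₀ ω|^3 := by
    intro n ω
    have := htay (δ n ω) (Θ₀ ω) (θ ω)
    have heq : R n ω = L (δ n ω) (θ ω) - L (Θ₀ ω) (θ ω)
        - L' (Θ₀ ω) (θ ω) * (δ n ω - Θ₀ ω)
        - 1/2 * L'' (Θ₀ ω) (θ ω) * (δ n ω - Θ₀ ω)^2 := by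
      simp only [hR]; ring
    rw [heq]
    exact this
  have hsqint : ∀ n, Integrable (fun ω => (δ n ω - Θ₀ ω)^2) μ := fun n =>
    (hδ2 n).integrable_sq
  -- identify LHS with ∫ R n
  have hLHS : ∀ n, (∫ ω, L (δ n ω) (θ ω) ∂μ) - (∫ ω, L (Θ₀ ω) (θ ω) ∂μ)
      - (1 / 2) * ∫ ω, L'' (Θ₀ ω) (θ ω) * (δ n ω - Θ₀ ω) ^ 2 ∂μ = ∫ ω, R n ω ∂μ := by
    intro n
    have i1 : Integrable (fun ω => L (δ n ω) (θ ω) - L (Θ₀ ω) (θ ω)) μ := (hint1 n).sub hint2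
    have i2 : Integrable (fun ω => L (δ n ω) (θ ω) - L (Θ₀ ω) (θ ω)
        - (δ n ω - Θ₀ ω) * L' (Θ₀ ω) (θ ω)) μ := i1.sub (hint5 n)
    have i3 : Integrable (fun ω => 1/2 * (L'' (Θ₀ ω) (θ ω) * (δ n ω - Θ₀ ω)^2)) μ :=
      (hint3 n).const_mul (1/2)
    simp only [hR]
    rw [integral_sub i2 i3, integral_sub i1 (hint5 n), integral_sub (hint1 n) hint2,
      integral_const_mul, hzero n]
    ring
  rw [isLittleO_iff]
  intro c hc
  have hε : (0:ℝ) < c / C0 := by positivity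
  filter_upwards [hunif (c / C0) hε] with n hn
  have hptw : ∀ ω, ‖R n ω‖ ≤ c * (δ n ω - Θ₀ ω)^2 := by
    intro ω
    have h1 := hRbound n ω
    have h2 := hn ω
    have h3 : C0 * |δ n ω - Θ₀ ω|^3 ≤ c * (δ n ω - Θ₀ ω)^2 := by
      have habs : |δ n ω - Θ₀ ω|^2 = (δ n ω - Θ₀ ω)^2 := sq_abs _
      have : C0 * |δ n ω - Θ₀ ω|^3 = C0 * |δ n ω - Θ₀ ω| * |δ n ω - Θ₀ ω|^2 := by ring
      rw [this, habs]
      have : C0 * |δ n ω - Θ₀ ω| ≤ c := by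
        calc C0 * |δ n ω - Θ₀ ω| ≤ C0 * (c / C0) := by nlinarith
          _ = c := by field_simp
      nlinarith [sq_nonneg (δ n ω - Θ₀ ω)]
    calc ‖R n ω‖ = |R n ω| := rfl
      _ ≤ C0 * |δ n ω - Θ₀ ω|^3 := h1
      _ ≤ c * (δ n ω - Θ₀ ω)^2 := h3
  have hnorm : ‖(∫ ω, L (δ n ω) (θ ω) ∂μ) - (∫ ω, L (Θ₀ ω) (θ ω) ∂μ)
      - (1 / 2) * ∫ ω, L'' (Θ₀ ω) (θ ω) * (δ n ω - Θ₀ ω) ^ 2 ∂μ‖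
      ≤ c * ∫ ω, (δ n ω - Θ₀ ω)^2 ∂μ := by
    rw [hLHS n]
    calc ‖∫ ω, R n ω ∂μ‖ ≤ ∫ ω, ‖R n ω‖ ∂μ := norm_integral_le_integral_norm _
      _ ≤ ∫ ω, c * (δ n ω - Θ₀ ω)^2 ∂μ :=
          integral_mono (hRint n).norm ((hsqint n).const_mul c) hptw
      _ = c * ∫ ω, (δ n ω - Θ₀ ω)^2 ∂μ := integral_const_mul _ _
  refine hnorm.trans ?_
  have : ‖∫ ω, (δ n ω - Θ₀ ω)^2 ∂μ‖ = ∫ ω, (δ n ω - Θ₀ ω)^2 ∂μ := by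
    rw [Real.norm_eq_abs, abs_of_nonneg (integral_nonneg fun ω => sq_nonneg _)]
  rw [this]
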